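/- arXiv:2402.06391 — 3 statements merged into one kernel-verified Lean document; each statement's English description precedes it below -/
import Mathlib

section
/- Freniche's Lemma for effect algebras: Let G be a normed abelian group and L an effect algebra having the orthogonally sequential property (OSP) and the subsequential interpolation property (SIP). Then for every ε > 0, every orthogonal sequence (a_n) in L, and every exhaustive measure μ : L → G, there exist an infinite set M ⊆ ℕ and an element a ∈ L such that ‖μ(a)‖ ≤ ε, a_n ≤ a for all n ∈ M, and a ≤ 1 ⊖ a_n for all n ∈ ℕ∖M. -/
open Filter Topology
open scoped ENNReal NNReal

/-- An effect algebra: a partial commutative monoid with orthosupplementation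
and the zero-one law. `D a b` means `a ⊕ b` is defined; `add` is the (junk-valued
outside `D`) total extension of `⊕`. -/
structure EffectAlgebra (L : Type*) where
  D : L → L → Prop
  add : L → L → L
  zero : L
  one : L
  comm_def : ∀ {a b}, D a b → D b a
  comm : ∀ {a b}, D a b → add a b = add b a
  assoc_def₁ : ∀ {a b c}, D b c → D a (add b c) → D a b
  assoc_def₂ : ∀ {a b c}, D b c → D a (add b c) → D (add a b) c
  assoc : ∀ {a b c}, D b c → D a (add b c) → add (add a b) c = add a (add b c)
  orth : ∀ a, ∃! a', D a a' ∧ add a a' = one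
  zero_one : ∀ {a}, D one a → a = zero

namespace EffectAlgebra

variable {L : Type*}

/-- The canonical order: `a ≤ b` iff `a ⊕ r = b` for some `r`. -/
def le (E : EffectAlgebra L) (a b : L) : Prop := ∃ r, E.D a r ∧ E.add a r = b

/-- The orthosupplement `1 ⊖ a`. -/
noncomputable def compl (E : EffectAlgebra L) (a : L) : L := (E.orth a).choose

/-- Partial sums `a 0 ⊕ ⋯ ⊕ a n`. -/
def psum (E : EffectAlgebra L) (a : ℕ → L) : ℕ → L
  | 0 => a 0
  | n + 1 => E.add (E.psum a n) (a (n + 1))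

/-- A sequence is orthogonal when all its finite orthosums are defined. -/
def Orthogonal (E : EffectAlgebra L) (a : ℕ → L) : Prop :=
  ∀ n, E.D (E.psum a n) (a (n + 1))

/-- `s` is the supremum of the set `S` in the canonical order. -/
def IsSup (E : EffectAlgebra L) (S : Set L) (s : L) : Prop :=
  (∀ x ∈ S, E.le x s) ∧ ∀ u, (∀ x ∈ S, E.le x u) → E.le s u

/-- `s = ⊕ₙ a n`: the sequence is orthogonal and `s` is the sup of the finite orthosums. -/
def IsOrthoSum (E : EffectAlgebra L) (a : ℕ → L) (s : L) : Prop :=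
  E.Orthogonal a ∧ E.IsSup (Set.range (E.psum a)) s

/-- Additive (finitely additive) measure. -/
def IsMeasure {G : Type*} [AddCommMonoid G] (E : EffectAlgebra L) (μ : L → G) : Prop :=
  ∀ a b, E.D a b → μ (E.add a b) = μ a + μ b

/-- σ-additivity: `μ (⊕ₙ a n) = Σₙ μ (a n)` whenever the orthosum exists. -/
def SigmaAdditive {G : Type*} [AddCommMonoid G] [TopologicalSpace G]
    (E : EffectAlgebra L) (μ : L → G) : Prop :=
  ∀ a s, E.IsOrthoSum a s →
    Tendsto (fun n => ∑ k ∈ Finset.range n, μ (a k)) atTop (𝓝 (μ s))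

/-- Exhaustivity: `μ (a n) → 0` along every orthogonal sequence. -/
def Exhaustive {G : Type*} [AddCommMonoid G] [TopologicalSpace G]
    (E : EffectAlgebra L) (μ : L → G) : Prop :=
  ∀ a, E.Orthogonal a → Tendsto (fun n => μ (a n)) atTop (𝓝 0)

/-- A generator: every element is the sup of an increasing sequence from `B`. -/
def IsGenerator (E : EffectAlgebra L) (B : Set L) : Prop :=
  ∀ a : L, ∃ b : ℕ → L, (∀ n, b n ∈ B) ∧ (∀ n, E.le (b n) (b (n + 1)))
    ∧ E.IsSup (Set.range b) a

/-- Riesz decomposition property. -/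
def RDP (E : EffectAlgebra L) : Prop :=
  ∀ a b c, E.D a b → E.le c (E.add a b) →
    ∃ c₁ c₂, E.D c₁ c₂ ∧ E.add c₁ c₂ = c ∧ E.le c₁ a ∧ E.le c₂ b

/-- Strong Riesz decomposition property. -/
def sRDP (E : EffectAlgebra L) : Prop :=
  ∀ (a : ℕ → L) (s c : L), E.IsOrthoSum a s → E.le c s →
    ∃ c' : ℕ → L, E.IsOrthoSum c' c ∧ ∀ n, E.le (c' n) (a n)

/-- A natural basis: an orthogonal sequence of minimal nonzero elements with orthosum `1`. -/
def IsNaturalBasis (E : EffectAlgebra L) (b : ℕ → L) : Prop :=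
  E.IsOrthoSum b E.one ∧
  ∀ n, b n ≠ E.zero ∧ ∀ c, c ≠ E.zero → E.le c (b n) → c = b n

/-- The set of finite orthosums of elements of the sequence `b`. -/
def finOrthosums (E : EffectAlgebra L) (b : ℕ → L) : Set L :=
  { x | ∃ c : ℕ → L, (∀ n, c n = b n ∨ c n = E.zero) ∧ E.Orthogonal c ∧
        ∃ N, x = E.psum c N }

/-- A sequence of measures is pointwise convergent. -/
def PtwiseConv (μ : ℕ → L → ℝ) : Prop :=
  ∀ a : L, ∃ x : ℝ, Tendsto (fun i => μ i a) atTop (𝓝 x)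

/-- Uniform exhaustivity of a sequence of measures. -/
def UnifExhaustive (E : EffectAlgebra L) (μ : ℕ → L → ℝ) : Prop :=
  ∀ a, E.Orthogonal a →
    TendstoUniformly (fun n (i : ℕ) => μ i (a n)) (fun _ => (0 : ℝ)) atTop

/-- Uniform strong additivity of a sequence of measures. -/
def UnifStronglyAdditive (E : EffectAlgebra L) (μ : ℕ → L → ℝ) : Prop :=
  ∀ a, E.Orthogonal a → ∃ f : ℕ → ℝ,
    TendstoUniformly (fun n (i : ℕ) => ∑ k ∈ Finset.range n, μ i (a k)) f atTop

/-- The Nikodym property. -/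
def Nikodym (E : EffectAlgebra L) : Prop :=
  ∀ μ : ℕ → L → ℝ, (∀ i, E.IsMeasure (μ i)) → (∀ i, ∃ M, ∀ a, |μ i a| ≤ M) →
    (∀ a : L, ∃ M, ∀ i, |μ i a| ≤ M) → ∃ M, ∀ i, ∀ a : L, |μ i a| ≤ M

/-- The Grothendieck property. -/
def Grothendieck (E : EffectAlgebra L) : Prop :=
  ∀ μ : ℕ → L → ℝ, (∀ i, E.IsMeasure (μ i)) → (∀ i, ∃ M, ∀ a, |μ i a| ≤ M) →
    PtwiseConv μ → (∃ M, ∀ i, ∀ a : L, |μ i a| ≤ M) → E.UnifStronglyAdditive μ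

/-- The Vitali-Hahn-Saks property. -/
def VHS (E : EffectAlgebra L) : Prop :=
  ∀ μ : ℕ → L → ℝ, (∀ i, E.IsMeasure (μ i)) → (∀ i, ∃ M, ∀ a, |μ i a| ≤ M) →
    PtwiseConv μ → E.UnifExhaustive μ

/-- The σ-Nikodym property. -/
def SigmaNikodym (E : EffectAlgebra L) : Prop :=
  ∀ μ : ℕ → L → ℝ, (∀ i, E.IsMeasure (μ i)) → (∀ i, E.SigmaAdditive (μ i)) →
    (∀ i, ∃ M, ∀ a, |μ i a| ≤ M) →
    (∀ a : L, ∃ M, ∀ i, |μ i a| ≤ M) → ∃ M, ∀ i, ∀ a : L, |μ i a| ≤ M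

/-- The σ-Vitali-Hahn-Saks property. -/
def SigmaVHS (E : EffectAlgebra L) : Prop :=
  ∀ μ : ℕ → L → ℝ, (∀ i, E.IsMeasure (μ i)) → (∀ i, E.SigmaAdditive (μ i)) →
    (∀ i, ∃ M, ∀ a, |μ i a| ≤ M) → PtwiseConv μ → E.UnifExhaustive μ

/-- A bounding subset. -/
def Bounding (E : EffectAlgebra L) (B : Set L) : Prop :=
  ∀ (G : Type) [NormedAddCommGroup G], ∀ μ : ℕ → L → G,
    (∀ i, E.IsMeasure (μ i)) → (∀ i, E.SigmaAdditive (μ i)) →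
    (∀ a : L, ∃ M, ∀ i, ‖μ i a‖ ≤ M) →
    ((∃ M, ∀ i, ∀ b ∈ B, ‖μ i b‖ ≤ M) ↔ (∃ M, ∀ i, ∀ a : L, ‖μ i a‖ ≤ M))

/-- A natural subset: a generator closed under orthosums of orthogonal pairs all of whose
orthogonal-complement slices are bounding. -/
def NaturalSubset (E : EffectAlgebra L) (B : Set L) : Prop :=
  E.IsGenerator B ∧ (∀ b ∈ B, ∀ c ∈ B, E.D b c → E.add b c ∈ B) ∧
    ∀ b ∈ B, E.Bounding {c ∈ B | E.D c b}

/-- A natural effect algebra: one admitting a natural subset. -/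
def Natural (E : EffectAlgebra L) : Prop := ∃ B, E.NaturalSubset B

/-- The orthogonally sequential property. -/
def OSP (E : EffectAlgebra L) : Prop :=
  ∀ b : ℕ → L, ∃ c : ℕ → L, E.Orthogonal c ∧ (∀ k, E.le (c k) (b k)) ∧
    ∀ (a : L) (k₀ : ℕ), E.le a (b k₀) → (∀ i, i ≠ k₀ → E.le (b i) (E.compl a)) →
      E.le a (c k₀)

/-- The subsequential interpolation property. -/
def SIP (E : EffectAlgebra L) : Prop :=
  ∀ a : ℕ → L, E.Orthogonal a → ∀ M : Set ℕ, M.Infinite →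
    ∃ (x : L) (N : Set ℕ), N ⊆ M ∧ N.Infinite ∧ (∀ n ∈ N, E.le (a n) x) ∧
      ∀ n ∉ N, E.le (a n) (E.compl x)

/-- Iterated orthosum starting from `x`: all steps defined. -/
def OrthoFrom (E : EffectAlgebra L) : L → List L → Prop
  | _, [] => True
  | x, y :: ys => E.D x y ∧ E.OrthoFrom (E.add x y) ys

/-- The orthosum `x ⊕ y₁ ⊕ ⋯ ⊕ yₙ` of a nonempty list. -/
def psumList (E : EffectAlgebra L) : L → List L → L
  | x, [] => x
  | x, y :: ys => E.psumList (E.add x y) ys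

/-- The variation of a measure: the sup over finite decompositions
`e = e₁ ⊕ ⋯ ⊕ eₙ` of `Σ ‖μ eᵢ‖`, valued in `[0,∞]`. -/
noncomputable def variation {G : Type*} [NormedAddCommGroup G]
    (E : EffectAlgebra L) (μ : L → G) (e : L) : ℝ≥0∞ :=
  sSup { v : ℝ≥0∞ | ∃ (x : L) (xs : List L), E.OrthoFrom x xs ∧ E.psumList x xs = e ∧
    v = ((x :: xs).map fun y => (‖μ y‖₊ : ℝ≥0∞)).sum }

end EffectAlgebra

namespace EffectAlgebra

variable {L : Type*} (E : EffectAlgebra L)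

lemma assoc' {a r s : L} (h1 : E.D a r) (h2 : E.D (E.add a r) s) :
    E.D r s ∧ E.D a (E.add r s) ∧ E.add a (E.add r s) = E.add (E.add a r) s := by
  have hs : E.D s (E.add a r) := E.comm_def h2
  have hsa : E.D s a := E.assoc_def₁ h1 hs
  have h3 : E.D (E.add s a) r := E.assoc_def₂ h1 hs
  have has : E.D a s := E.comm_def hsa
  have h4 : E.D r (E.add a s) := by
    have h3' : E.D (E.add a s) r := by rwa [E.comm hsa] at h3
    exact E.comm_def h3'
  have hra : E.D r a := E.assoc_def₁ has h4
  have h5 : E.D (E.add r a) s := E.assoc_def₂ has h4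
  have hsra : E.D s (E.add r a) := E.comm_def h5
  have hsr : E.D s r := E.assoc_def₁ hra hsra
  have hrs : E.D r s := E.comm_def hsr
  have h6 : E.D (E.add s r) a := E.assoc_def₂ hra hsra
  have h7 : E.D a (E.add s r) := E.comm_def h6
  have h8 : E.D a (E.add r s) := by rwa [E.comm hsr] at h7
  refine ⟨hrs, h8, ?_⟩
  calc E.add a (E.add r s) = E.add a (E.add s r) := by rw [E.comm hsr]
    _ = E.add (E.add s r) a := E.comm h7
    _ = E.add s (E.add r a) := E.assoc hra hsra
    _ = E.add s (E.add a r) := by rw [E.comm hra]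
    _ = E.add (E.add a r) s := E.comm hs

lemma le_trans' {a b c : L} (hab : E.le a b) (hbc : E.le b c) : E.le a c := by
  obtain ⟨r, hr, rfl⟩ := hab
  obtain ⟨s, hs, hs2⟩ := hbc
  obtain ⟨_, hD, heq⟩ := E.assoc' hr hs
  exact ⟨E.add r s, hD, heq.trans hs2⟩

lemma compl_def (a : L) : E.D a (E.compl a) ∧ E.add a (E.compl a) = E.one :=
  (E.orth a).choose_spec.1

lemma compl_unique {a b : L} (h : E.D a b) (h2 : E.add a b = E.one) : b = E.compl a :=
  (E.orth a).choose_spec.2 b ⟨h, h2⟩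

lemma le_compl_swap {a b : L} (h : E.le b (E.compl a)) : E.le a (E.compl b) := by
  obtain ⟨r, hbr, hbr2⟩ := h
  have h1 : E.D a (E.compl a) := (E.compl_def a).1
  have h2 : E.add a (E.compl a) = E.one := (E.compl_def a).2
  rw [← hbr2] at h1 h2
  have hab : E.D a b := E.assoc_def₁ hbr h1
  have h3 : E.D (E.add a b) r := E.assoc_def₂ hbr h1
  have h4 : E.add (E.add a b) r = E.one := by rw [E.assoc hbr h1]; exact h2
  have hba : E.D b a := E.comm_def hab
  have h5 : E.D (E.add b a) r := by rwa [E.comm hba]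
  obtain ⟨har, hDb, heq⟩ := E.assoc' hba h5
  have h6 : E.add b (E.add a r) = E.one := by rw [heq, E.comm hba]; exact h4
  exact ⟨r, har, E.compl_unique hDb h6⟩

end EffectAlgebra

open EffectAlgebra in
/-- Freniche's lemma for effect algebras with OSP and SIP. -/
theorem stmt16 {L : Type*} {G : Type*} [NormedAddCommGroup G]
    (E : EffectAlgebra L) (hOSP : E.OSP) (hSIP : E.SIP)
    (ε : ℝ) (hε : 0 < ε) (a : ℕ → L) (ha : E.Orthogonal a)
    (μ : L → G) (hμ : E.IsMeasure μ) (hex : E.Exhaustive μ) :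
    ∃ (M : Set ℕ) (x : L), M.Infinite ∧ ‖μ x‖ ≤ ε ∧
      (∀ n ∈ M, E.le (a n) x) ∧ ∀ n ∉ M, E.le x (E.compl (a n)) := by
  -- Partition ℕ into infinitely many infinite sets via the pairing function.
  set P : ℕ → Set ℕ := fun k => {n | (Nat.unpair n).1 = k} with hPdef
  have hPinf : ∀ k, (P k).Infinite := by
    intro k
    refine Set.infinite_of_injective_forall_mem (f := fun m => Nat.pair k m) ?_ ?_
    · intro m m' h
      have := congrArg (fun n => (Nat.unpair n).2) h
      simpa [Nat.unpair_pair] using this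
    · intro m
      simp [hPdef, Nat.unpair_pair]
  -- Apply SIP to each piece.
  have hchoice : ∀ k, ∃ (x : L) (N : Set ℕ), N ⊆ P k ∧ N.Infinite ∧
      (∀ n ∈ N, E.le (a n) x) ∧ ∀ n ∉ N, E.le (a n) (E.compl x) :=
    fun k => hSIP a ha (P k) (hPinf k)
  choose x N hsub hinf hleN hleN' using hchoice
  -- Apply OSP to the interpolants.
  obtain ⟨c, hcorth, hcle, hckey⟩ := hOSP x
  -- Each c k is itself an interpolant for N k.
  have hkey : ∀ k, ∀ n ∈ N k, E.le (a n) (c k) := by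
    intro k n hn
    refine hckey (a n) k (hleN k n hn) ?_
    intro i hi
    have hnNi : n ∉ N i := by
      intro hni
      exact hi ((hsub i hni).symm.trans (hsub k hn))
    exact E.le_compl_swap (hleN' i n hnNi)
  have hkey' : ∀ k, ∀ n ∉ N k, E.le (c k) (E.compl (a n)) := by
    intro k n hn
    exact E.le_trans' (hcle k) (E.le_compl_swap (hleN' k n hn))
  -- Exhaustivity gives some k with small measure.
  have htend : Tendsto (fun k => ‖μ (c k)‖) atTop (𝓝 0) :=
    tendsto_norm_zero.comp (hex c hcorth)
  obtain ⟨k, hk⟩ := (htend.eventually (eventually_le_nhds hε)).exists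
  exact ⟨N k, c k, hinf k, hk, hkey k, hkey' k⟩
end

section
/- Let L be an effect algebra with the Riesz Decomposition Property, G a normed abelian group, and μ : L → G an additive measure. Then for orthogonal e, f ∈ L, |μ|(e ⊕ f) = |μ|(e) + |μ|(f); that is, the variation |μ| is an additive [0,∞]-valued measure on L. -/
open Filter Topology
open scoped ENNReal NNReal

namespace EffectAlgebra

variable {L : Type*} (E : EffectAlgebra L)

lemma zero_props (a : L) : E.D a E.zero ∧ E.add a E.zero = a := by
  obtain ⟨a', ⟨hD, hadd⟩, _⟩ := E.orth a
  obtain ⟨o', ⟨hDo, haddo⟩, _⟩ := E.orth E.one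
  have hz : o' = E.zero := E.zero_one hDo
  subst hz
  have h1 : E.D E.zero (E.add a a') := by
    rw [hadd]; exact E.comm_def hDo
  have hDza : E.D E.zero a := E.assoc_def₁ hD h1
  have hDaz : E.D a E.zero := E.comm_def hDza
  refine ⟨hDaz, ?_⟩
  have h2 : E.D (E.add E.zero a) a' := E.assoc_def₂ hD h1
  have h3 : E.add (E.add E.zero a) a' = E.one := by
    rw [E.assoc hD h1, hadd, ← E.comm hDo, haddo]
  obtain ⟨c, _, hu⟩ := E.orth a'
  have e1 : a = c := hu a ⟨E.comm_def hD, by rw [← E.comm hD, hadd]⟩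
  have e2 : E.add E.zero a = c := hu _ ⟨E.comm_def h2, by rw [← E.comm h2, h3]⟩
  rw [E.comm hDaz, e2, ← e1]

lemma assoc'_s17 {a b c : L} (hab : E.D a b) (h : E.D (E.add a b) c) :
    E.D b c ∧ E.D a (E.add b c) ∧ E.add (E.add a b) c = E.add a (E.add b c) := by
  have hba : E.D b a := E.comm_def hab
  have h1 : E.D (E.add b a) c := by rwa [E.comm hab] at h
  have hc1 : E.D c (E.add b a) := E.comm_def h1
  have hcb : E.D c b := E.assoc_def₁ hba hc1
  have hbc : E.D b c := E.comm_def hcb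
  have h2 : E.D (E.add c b) a := E.assoc_def₂ hba hc1
  have h3 : E.D a (E.add b c) := by
    have := E.comm_def h2
    rwa [E.comm hcb] at this
  refine ⟨hbc, h3, ?_⟩
  calc E.add (E.add a b) c = E.add c (E.add b a) := by rw [E.comm hab, E.comm h1]
    _ = E.add (E.add c b) a := (E.assoc hba hc1).symm
    _ = E.add a (E.add c b) := E.comm h2
    _ = E.add a (E.add b c) := by rw [E.comm hcb]

lemma swap {a b c : L} (hbc : E.D b c) (h : E.D a (E.add b c)) :
    E.D a c ∧ E.D b (E.add a c) ∧ E.add a (E.add b c) = E.add b (E.add a c) := by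
  have hab : E.D a b := E.assoc_def₁ hbc h
  have habc : E.D (E.add a b) c := E.assoc_def₂ hbc h
  have eq1 : E.add (E.add a b) c = E.add a (E.add b c) := E.assoc hbc h
  have hba : E.D b a := E.comm_def hab
  have h2 : E.D (E.add b a) c := by rwa [E.comm hab] at habc
  obtain ⟨hac, hbac, eq2⟩ := E.assoc'_s17 hba h2
  exact ⟨hac, hbac, by rw [← eq1, E.comm hab, eq2]⟩

lemma cancel {a b c : L} (hab : E.D a b) (hac : E.D a c)
    (h : E.add a b = E.add a c) : b = c := by
  obtain ⟨w, ⟨hsw, hone⟩, _⟩ := E.orth (E.add a b)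
  obtain ⟨hbw, h1, eq1⟩ := E.assoc'_s17 hab hsw
  have hone1 : E.add a (E.add b w) = E.one := by rw [← eq1, hone]
  obtain ⟨haw, hbaw, eq2⟩ := E.swap hbw h1
  have honeb : E.add b (E.add a w) = E.one := by rw [← eq2, hone1]
  have hsw' : E.D (E.add a c) w := h ▸ hsw
  have hone' : E.add (E.add a c) w = E.one := by rw [← h, hone]
  obtain ⟨hcw, h1', eq1'⟩ := E.assoc'_s17 hac hsw'
  have hone1' : E.add a (E.add c w) = E.one := by rw [← eq1', hone']
  obtain ⟨_, hcaw, eq2'⟩ := E.swap hcw h1'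
  have honec : E.add c (E.add a w) = E.one := by rw [← eq2', hone1']
  obtain ⟨d, _, hu⟩ := E.orth (E.add a w)
  have e1 : b = d := hu b ⟨E.comm_def hbaw, by rw [← E.comm hbaw, honeb]⟩
  have e2 : c = d := hu c ⟨E.comm_def hcaw, by rw [← E.comm hcaw, honec]⟩
  rw [e1, e2]

lemma psumList_append : ∀ (xs l : List L) (x : L),
    E.psumList x (xs ++ l) = E.psumList (E.psumList x xs) l
  | [], _, _ => rfl
  | y :: ys, l, x => psumList_append ys l (E.add x y)

lemma orthoFrom_append : ∀ (xs l : List L) (x : L), E.OrthoFrom x xs →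
    E.OrthoFrom (E.psumList x xs) l → E.OrthoFrom x (xs ++ l)
  | [], _, _, _, h => h
  | y :: ys, l, x, ⟨h1, h2⟩, h => ⟨h1, orthoFrom_append ys l (E.add x y) h2 h⟩

lemma orthoFrom_concat {z : L} : ∀ (zs : List L) (x : L), E.OrthoFrom x (zs ++ [z]) →
    E.OrthoFrom x zs ∧ E.D (E.psumList x zs) z
  | [], _, ⟨h1, _⟩ => ⟨trivial, h1⟩
  | y :: ys, x, ⟨h1, h2⟩ => by
    obtain ⟨ha, hb⟩ := orthoFrom_concat ys (E.add x y) h2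
    exact ⟨⟨h1, ha⟩, hb⟩

lemma prepend : ∀ (ys : List L) (y e : L), E.OrthoFrom y ys → E.D e (E.psumList y ys) →
    E.OrthoFrom e (y :: ys) ∧ E.psumList e (y :: ys) = E.add e (E.psumList y ys)
  | [], y, e, _, he => ⟨⟨he, trivial⟩, rfl⟩
  | z :: zs, y, e, ⟨hyz, h2⟩, he => by
    obtain ⟨⟨hD, hO⟩, heq⟩ := prepend zs (E.add y z) e h2 he
    have hey : E.D e y := E.assoc_def₁ hyz hD
    have heyz : E.D (E.add e y) z := E.assoc_def₂ hyz hD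
    have eq : E.add (E.add e y) z = E.add e (E.add y z) := E.assoc hyz hD
    refine ⟨⟨hey, show E.D (E.add e y) z ∧ E.OrthoFrom (E.add (E.add e y) z) zs from
      ⟨heyz, by rwa [eq]⟩⟩, ?_⟩
    show E.psumList (E.add (E.add e y) z) zs = _
    rw [eq]; exact heq

end EffectAlgebra

section Split
open EffectAlgebra
variable {L : Type*} {G : Type*} [NormedAddCommGroup G]

lemma split_lemma (E : EffectAlgebra L) (hR : E.RDP) (μ : L → G) (hμ : E.IsMeasure μ)
    (xs : List L) : ∀ (x e f : L), E.D e f → E.OrthoFrom x xs →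
    E.psumList x xs = E.add e f →
    ∃ (u : L) (us : List L) (v : L) (vs : List L),
      E.OrthoFrom u us ∧ E.psumList u us = e ∧ E.OrthoFrom v vs ∧ E.psumList v vs = f ∧
      ((x :: xs).map fun y => (‖μ y‖₊ : ℝ≥0∞)).sum ≤
        ((u :: us).map fun y => (‖μ y‖₊ : ℝ≥0∞)).sum +
        ((v :: vs).map fun y => (‖μ y‖₊ : ℝ≥0∞)).sum := by
  induction xs using List.reverseRecOn with
  | nil =>
    intro x e f hef _ heq
    refine ⟨e, [], f, [], trivial, rfl, trivial, rfl, ?_⟩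
    simp only [List.map, List.sum_cons, List.sum_nil, add_zero]
    rw [show x = E.add e f from heq, hμ e f hef]
    exact_mod_cast nnnorm_add_le (μ e) (μ f)
  | append_singleton zs z ih =>
    intro x e f hef hO heq
    obtain ⟨hOzs, hpz⟩ := E.orthoFrom_concat zs x hO
    have heq' : E.add (E.psumList x zs) z = E.add e f := by
      rw [← heq, E.psumList_append]; rfl
    have hlez : E.le z (E.add e f) :=
      ⟨E.psumList x zs, E.comm_def hpz, by rw [← E.comm hpz, heq']⟩
    obtain ⟨z₁, z₂, hz12, hzz, ⟨e₁, hz₁e₁, he⟩, ⟨e₂, hz₂e₂, hf⟩⟩ := hR e f z hef hlez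
    have hef1 : E.D (E.add z₁ e₁) f := he ▸ hef
    obtain ⟨he₁f, hz₁ef, eqA⟩ := E.assoc'_s17 hz₁e₁ hef1
    have he₁f' : E.D e₁ (E.add z₂ e₂) := by rw [hf]; exact he₁f
    obtain ⟨he₁e₂, hz₂q, eqB⟩ := E.swap hz₂e₂ he₁f'
    have hz₁big : E.D z₁ (E.add z₂ (E.add e₁ e₂)) := by
      have := hz₁ef; rw [← hf, eqB] at this; exact this
    have eqC : E.add e f = E.add z₁ (E.add z₂ (E.add e₁ e₂)) := by
      calc E.add e f = E.add (E.add z₁ e₁) f := by rw [he]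
        _ = E.add z₁ (E.add e₁ f) := eqA
        _ = E.add z₁ (E.add e₁ (E.add z₂ e₂)) := by rw [hf]
        _ = E.add z₁ (E.add z₂ (E.add e₁ e₂)) := by rw [eqB]
    have hq : E.D (E.add z₁ z₂) (E.add e₁ e₂) := E.assoc_def₂ hz₂q hz₁big
    have eqD : E.add (E.add z₁ z₂) (E.add e₁ e₂) = E.add e f := by
      rw [E.assoc hz₂q hz₁big, ← eqC]
    rw [hzz] at hq eqD
    have hzp : E.D z (E.psumList x zs) := E.comm_def hpz
    have eqF : E.add z (E.psumList x zs) = E.add e f := (E.comm hzp).trans heq'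
    have hpe : E.psumList x zs = E.add e₁ e₂ :=
      (E.cancel hq hzp (eqD.trans eqF.symm)).symm
    obtain ⟨u, us, v, vs, hOu, hpu, hOv, hpv, hsum⟩ := ih x e₁ e₂ he₁e₂ hOzs hpe
    have hDe₁z₁ : E.D e₁ z₁ := E.comm_def hz₁e₁
    have hDe₂z₂ : E.D e₂ z₂ := E.comm_def hz₂e₂
    refine ⟨u, us ++ [z₁], v, vs ++ [z₂],
      E.orthoFrom_append us [z₁] u hOu (by rw [hpu]; exact ⟨hDe₁z₁, trivial⟩),
      by rw [E.psumList_append, hpu]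
         show E.add e₁ z₁ = e
         rw [E.comm hDe₁z₁, he],
      E.orthoFrom_append vs [z₂] v hOv (by rw [hpv]; exact ⟨hDe₂z₂, trivial⟩),
      by rw [E.psumList_append, hpv]
         show E.add e₂ z₂ = f
         rw [E.comm hDe₂z₂, hf],
      ?_⟩
    have hgz : (‖μ z‖₊ : ℝ≥0∞) ≤ (‖μ z₁‖₊ : ℝ≥0∞) + (‖μ z₂‖₊ : ℝ≥0∞) := by
      rw [← hzz, hμ z₁ z₂ hz12]
      exact_mod_cast nnnorm_add_le (μ z₁) (μ z₂)
    have hsplit : ∀ (a b : L) (l : List L),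
        ((a :: (l ++ [b])).map fun y => (‖μ y‖₊ : ℝ≥0∞)).sum =
        ((a :: l).map fun y => (‖μ y‖₊ : ℝ≥0∞)).sum + (‖μ b‖₊ : ℝ≥0∞) := by
      intro a b l; simp [add_assoc]
    rw [hsplit x z zs, hsplit u z₁ us, hsplit v z₂ vs]
    calc ((x :: zs).map fun y => (‖μ y‖₊ : ℝ≥0∞)).sum + (‖μ z‖₊ : ℝ≥0∞)
        ≤ (((u :: us).map fun y => (‖μ y‖₊ : ℝ≥0∞)).sum +
           ((v :: vs).map fun y => (‖μ y‖₊ : ℝ≥0∞)).sum) +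
          ((‖μ z₁‖₊ : ℝ≥0∞) + (‖μ z₂‖₊ : ℝ≥0∞)) := add_le_add hsum hgz
      _ = _ := by ring

end Split

open EffectAlgebra in
/-- Under the Riesz decomposition property, the variation of a measure is additive. -/
theorem stmt17 {L : Type*} {G : Type*} [NormedAddCommGroup G]
    (E : EffectAlgebra L) (hR : E.RDP) (μ : L → G) (hμ : E.IsMeasure μ) :
    ∀ e f : L, E.D e f →
      E.variation μ (E.add e f) = E.variation μ e + E.variation μ f := by
  intro e f hef
  set g : L → ℝ≥0∞ := fun y => (‖μ y‖₊ : ℝ≥0∞) with hg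
  refine le_antisymm ?_ ?_
  · refine sSup_le ?_
    rintro w ⟨x, xs, hO, hsum, rfl⟩
    obtain ⟨u, us, v, vs, hOu, hpu, hOv, hpv, hle⟩ :=
      split_lemma E hR μ hμ xs x e f hef hO hsum
    refine hle.trans (add_le_add ?_ ?_)
    · exact le_sSup ⟨u, us, hOu, hpu, rfl⟩
    · exact le_sSup ⟨v, vs, hOv, hpv, rfl⟩
  · have hne : ∀ a : L, Set.Nonempty { w : ℝ≥0∞ | ∃ (x : L) (xs : List L),
        E.OrthoFrom x xs ∧ E.psumList x xs = a ∧
        w = ((x :: xs).map fun y => (‖μ y‖₊ : ℝ≥0∞)).sum } := by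
      intro a
      exact ⟨_, a, [], trivial, rfl, rfl⟩
    haveI h1 := (hne e).to_subtype
    haveI h2 := (hne f).to_subtype
    unfold EffectAlgebra.variation
    rw [sSup_eq_iSup' (s := { w : ℝ≥0∞ | ∃ (x : L) (xs : List L),
        E.OrthoFrom x xs ∧ E.psumList x xs = e ∧
        w = ((x :: xs).map fun y => (‖μ y‖₊ : ℝ≥0∞)).sum }),
      sSup_eq_iSup' (s := { w : ℝ≥0∞ | ∃ (x : L) (xs : List L),
        E.OrthoFrom x xs ∧ E.psumList x xs = f ∧
        w = ((x :: xs).map fun y => (‖μ y‖₊ : ℝ≥0∞)).sum }),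
      ENNReal.iSup_add]
    refine iSup_le ?_
    rintro ⟨v₁, x, xs, hO1, hp1, rfl⟩
    rw [ENNReal.add_iSup]
    refine iSup_le ?_
    rintro ⟨v₂, y, ys, hO2, hp2, rfl⟩
    refine le_sSup ?_
    obtain ⟨hOp, hpp⟩ := E.prepend ys y e hO2 (by rw [hp2]; exact hef)
    refine ⟨x, xs ++ y :: ys, E.orthoFrom_append xs (y :: ys) x hO1 (by rw [hp1]; exact hOp),
      ?_, ?_⟩
    · rw [E.psumList_append, hp1, hpp, hp2]
    · rw [show x :: (xs ++ y :: ys) = (x :: xs) ++ (y :: ys) from rfl,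
        List.map_append, List.sum_append]
end

section
/- There exist an effect algebra L and a real-valued additive measure μ on L whose variation |μ| is not additive: there are orthogonal e, f ∈ L with |μ|(e ⊕ f) > |μ|(e) + |μ|(f). -/
open Filter Topology
open scoped ENNReal NNReal

/-!
If the norms of `μ` add up on every orthogonal pair whose sum lies in a set `S` closed under
summands, then the variation of `μ` at any `e ∈ S` is just `‖μ e‖`. In the six-element
orthomodular lattice `MO2` (the horizontal sum of the Boolean algebras generated by `X⁺` and
`Y⁺`) this applies to `X⁺` and `X⁻`, so each has variation `1`, while `⊤ = Y⁺ ⊕ Y⁻` has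
variation at least `|5| + |-3| = 8`.
-/

namespace EffectAlgebra

variable {L G : Type*} [NormedAddCommGroup G] (E : EffectAlgebra L) (μ : L → G)

theorem le_variation_of_add_eq {x y e : L} (hxy : E.D x y) (he : E.add x y = e) :
    (‖μ x‖₊ + ‖μ y‖₊ : ℝ≥0∞) ≤ E.variation μ e :=
  le_sSup ⟨x, [y], ⟨hxy, trivial⟩, he, by simp⟩

section SuperadditiveOn

variable {S : Set L} (hS : ∀ a b, E.D a b → E.add a b ∈ S → a ∈ S)
  (hμ : ∀ a b, E.D a b → E.add a b ∈ S → ‖μ a‖₊ + ‖μ b‖₊ ≤ ‖μ (E.add a b)‖₊)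
include hS

theorem mem_of_psumList_mem {x : L} {xs : List L} (hx : E.OrthoFrom x xs)
    (hS' : E.psumList x xs ∈ S) : x ∈ S := by
  induction xs generalizing x with
  | nil => exact hS'
  | cons y ys ih => exact hS x y hx.1 (ih hx.2 hS')

include hμ

theorem sum_nnnorm_le_of_orthoFrom {x : L} {xs : List L} (hx : E.OrthoFrom x xs)
    (hS' : E.psumList x xs ∈ S) :
    ((x :: xs).map fun y => (‖μ y‖₊ : ℝ≥0∞)).sum ≤ ‖μ (E.psumList x xs)‖₊ := by
  induction xs generalizing x with
  | nil => simp [psumList]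
  | cons y ys ih =>
    have hxy : E.add x y ∈ S := E.mem_of_psumList_mem hS hx.2 hS'
    have hsplit : (‖μ x‖₊ + ‖μ y‖₊ : ℝ≥0∞) ≤ ‖μ (E.add x y)‖₊ := by
      exact_mod_cast hμ x y hx.1 hxy
    calc ((x :: y :: ys).map fun y => (‖μ y‖₊ : ℝ≥0∞)).sum
        = (‖μ x‖₊ + ‖μ y‖₊ : ℝ≥0∞) + (ys.map fun y => (‖μ y‖₊ : ℝ≥0∞)).sum := by
          simp [add_assoc]
      _ ≤ ‖μ (E.add x y)‖₊ + (ys.map fun y => (‖μ y‖₊ : ℝ≥0∞)).sum := by gcongr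
      _ ≤ ‖μ (E.psumList x (y :: ys))‖₊ := ih hx.2 hS'

theorem variation_le_nnnorm_of_mem {e : L} (he : e ∈ S) : E.variation μ e ≤ ‖μ e‖₊ := by
  refine sSup_le ?_
  rintro v ⟨x, xs, hx, rfl, rfl⟩
  exact E.sum_nnnorm_le_of_orthoFrom μ hS hμ hx he

end SuperadditiveOn

end EffectAlgebra

inductive MO2 : Type
  | bot | xp | xm | yp | ym | top
  deriving DecidableEq

namespace MO2

instance : Fintype MO2 :=
  ⟨{bot, xp, xm, yp, ym, top}, fun a => by cases a <;> decide⟩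

def orth : MO2 → MO2 → Bool
  | bot, _ | _, bot => true
  | xp, xm | xm, xp | yp, ym | ym, yp => true
  | _, _ => false

def add : MO2 → MO2 → MO2
  | bot, b => b
  | a, bot => a
  | _, _ => top

def effectAlgebra : EffectAlgebra MO2 where
  D a b := orth a b = true
  add := add
  zero := bot
  one := top
  comm_def := by decide
  comm := by decide
  assoc_def₁ := by decide
  assoc_def₂ := by decide
  assoc := by decide
  orth a := by
    cases a
    · exact ⟨top, by decide, by decide⟩
    · exact ⟨xm, by decide, by decide⟩
    · exact ⟨xp, by decide, by decide⟩
    · exact ⟨ym, by decide, by decide⟩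
    · exact ⟨yp, by decide, by decide⟩
    · exact ⟨bot, by decide, by decide⟩
  zero_one := by decide

def μ : MO2 → ℝ
  | bot => 0
  | xp | xm => 1
  | yp => 5
  | ym => -3
  | top => 2

theorem isMeasure_μ : effectAlgebra.IsMeasure μ := by
  intro a b hab
  cases a <;> cases b <;> simp_all [effectAlgebra, orth, add, μ] <;> norm_num

-- Below `⊤` every orthogonal pair has a summand `bot`, where `μ` vanishes.
theorem variation_μ_le {e : MO2} (he : e ≠ top) : effectAlgebra.variation μ e ≤ ‖μ e‖₊ :=
  effectAlgebra.variation_le_nnnorm_of_mem μ (S := {a | a ≠ top})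
    (show ∀ a b, orth a b → add a b ≠ top → a ≠ top by decide)
    (by intro a b hab; cases a <;> cases b <;> simp_all [effectAlgebra, orth, add, μ])
    he

theorem variation_xp_add_variation_xm_lt :
    effectAlgebra.variation μ xp + effectAlgebra.variation μ xm <
      effectAlgebra.variation μ (effectAlgebra.add xp xm) := by
  have hxp : effectAlgebra.variation μ xp ≤ 1 := by
    simpa [μ] using variation_μ_le (e := xp) (by decide)
  have hxm : effectAlgebra.variation μ xm ≤ 1 := by
    simpa [μ] using variation_μ_le (e := xm) (by decide)
  have htop : ‖μ yp‖₊ + ‖μ ym‖₊ ≤ effectAlgebra.variation μ top :=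
    effectAlgebra.le_variation_of_add_eq μ (x := yp) (y := ym) rfl rfl
  have h8 : (‖μ yp‖₊ + ‖μ ym‖₊ : ℝ≥0∞) = 8 := by
    norm_num [μ, ← ENNReal.coe_add, Real.nnnorm_ofNat]
  calc effectAlgebra.variation μ xp + effectAlgebra.variation μ xm
      ≤ 1 + 1 := add_le_add hxp hxm
    _ < 8 := by norm_num
    _ ≤ effectAlgebra.variation μ top := h8 ▸ htop

end MO2

open EffectAlgebra in
/-- There are an effect algebra and a real-valued measure on it whose variation is
not additive. -/
theorem stmt18 :
    ∃ (L : Type) (E : EffectAlgebra L) (μ : L → ℝ), E.IsMeasure μ ∧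
      ∃ e f : L, E.D e f ∧
        E.variation μ e + E.variation μ f < E.variation μ (E.add e f) :=
  ⟨MO2, MO2.effectAlgebra, MO2.μ, MO2.isMeasure_μ, .xp, .xm, rfl,
    MO2.variation_xp_add_variation_xm_lt⟩
end
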